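/- Let D be a (pre)triangulated category, let Z be a ℂ-valued function on objects of D that is additive on distinguished triangles, and let P(φ) ⊆ D (φ ∈ ℝ) be strictly full additive subcategories satisfying: (s1) every nonzero E ∈ P(φ) satisfies Z(E) = m·exp(iπφ) for some real m > 0; (s2) if φ > ψ then Hom_D(E,F) = 0 for all E ∈ P(φ) and F ∈ P(ψ); (s3) P(φ+1) = P(φ)[1]. Say that an object X of D has a Harder–Narasimhan filtration if there is a finite sequence of morphisms 0 = X₀ → X₁ → ⋯ → Xₙ = X such that for each i the cone of X_{i−1} → X_i is a nonzero object of P(φ_i), with φ₁ > φ₂ > ⋯ > φₙ. If X and Y have Harder–Narasimhan filtrations, then so does the biproduct X ⊕ Y. -/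

import Mathlib

/-!
Read an HN filtration from the top: an object with an HN filtration whose phases exceed `b` is
zero, or an extension of a nonzero object of `P φ`, with `b < φ`, by an object whose filtration
has phases exceeding `φ`. Two such filtrations are merged like sorted lists: the factor of smaller
phase is split off (as the biproduct of its triangle with the triangle `F → F → 0`), or both top
factors together when their phases agree. This works because a biproduct of distinguished triangles
is distinguished and each `P φ` is closed under isomorphisms and biproducts.
-/

open CategoryTheory Limits Pretriangulated

universe v u

variable {D : Type u} [Category.{v} D] [HasZeroObject D] [Preadditive D] [HasShift D ℤ]
  [∀ n : ℤ, (CategoryTheory.shiftFunctor D n).Additive] [Pretriangulated D]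

/-- An object `E` has a Harder–Narasimhan filtration with respect to the slicing `P`:
a finite sequence `0 = X₀ → X₁ → ⋯ → Xₙ ≅ E` such that the cone of each
`X_{i-1} → X_i` is a nonzero object of `P(φ_i)`, with `φ₁ > φ₂ > ⋯ > φₙ`. -/
def HasHNFiltration (P : ℝ → Set D) (E : D) : Prop :=
  ∃ (n : ℕ) (X : Fin (n + 1) → D) (f : ∀ i : Fin n, X i.castSucc ⟶ X i.succ)
    (φ : Fin n → ℝ), IsZero (X 0) ∧ Nonempty (X (Fin.last n) ≅ E) ∧ StrictAnti φ ∧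
    ∀ i : Fin n, ∃ (A : D) (g : X i.succ ⟶ A) (h : A ⟶ (X i.castSucc)⟦(1 : ℤ)⟧),
      (Triangle.mk (f i) g h ∈ distTriang D) ∧ ¬ IsZero A ∧ A ∈ P (φ i)

section HNFiltration

-- Nonzero objects of `P φ` are the semistable objects of phase `φ`.
def HasSemistableCone (P : ℝ → Set D) (φ : ℝ) {X Y : D} (f : X ⟶ Y) : Prop :=
  ∃ (A : D) (g : Y ⟶ A) (h : A ⟶ X⟦(1 : ℤ)⟧),
    Triangle.mk f g h ∈ distTriang D ∧ ¬ IsZero A ∧ A ∈ P φ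

variable {P : ℝ → Set D}

lemma HasSemistableCone.of_iso {φ : ℝ} {X Y X' Y' : D} {f : X ⟶ Y} {f' : X' ⟶ Y'}
    (hf : HasSemistableCone P φ f) (e₁ : X ≅ X') (e₂ : Y ≅ Y')
    (comm : f ≫ e₂.hom = e₁.hom ≫ f') : HasSemistableCone P φ f' := by
  obtain ⟨A, g, h, hT, hA, hAP⟩ := hf
  refine ⟨A, e₂.inv ≫ g, h ≫ e₁.hom⟦(1 : ℤ)⟧', isomorphic_distinguished _ hT _ ?_, hA, hAP⟩
  refine Triangle.isoMk _ _ e₁.symm e₂.symm (Iso.refl A) ?_ ?_ ?_ <;> dsimp only [Triangle.mk]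
  · simp [← cancel_epi e₁.hom, ← reassoc_of% comm]
  · simp
  · simp [← Functor.map_comp]

inductive HasHNFiltrationAbove (P : ℝ → Set D) : ℝ → D → Prop
  | of_isZero {b : ℝ} {E : D} : IsZero E → HasHNFiltrationAbove P b E
  | extension {b φ : ℝ} {C E : D} (u : C ⟶ E) : b < φ → HasSemistableCone P φ u →
      HasHNFiltrationAbove P φ C → HasHNFiltrationAbove P b E

namespace HasHNFiltrationAbove

lemma mono {b b' : ℝ} {E : D} (h : HasHNFiltrationAbove P b E) (hb : b' ≤ b) :
    HasHNFiltrationAbove P b' E := by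
  cases h with
  | of_isZero hE => exact of_isZero hE
  | extension u hbφ hu hC => exact extension u (hb.trans_lt hbφ) hu hC

lemma of_iso {b : ℝ} {E E' : D} (h : HasHNFiltrationAbove P b E) (e : E ≅ E') :
    HasHNFiltrationAbove P b E' := by
  cases h with
  | of_isZero hE => exact of_isZero (hE.of_iso e.symm)
  | extension u hbφ hu hC =>
    exact extension (u ≫ e.hom) hbφ (hu.of_iso (Iso.refl _) e (by simp)) hC

end HasHNFiltrationAbove

lemma hasHNFiltrationAbove_last : ∀ {n : ℕ} (X : Fin (n + 1) → D)
    (f : ∀ i : Fin n, X i.castSucc ⟶ X i.succ) (φ : Fin n → ℝ) {b : ℝ}, IsZero (X 0) →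
    StrictAnti φ → (∀ i, b < φ i) → (∀ i, HasSemistableCone P (φ i) (f i)) →
    HasHNFiltrationAbove P b (X (Fin.last n))
  | 0, _, _, _, _, h0, _, _, _ => .of_isZero h0
  | n + 1, X, f, φ, _, h0, hφ, hb, hf =>
    .extension (f (Fin.last n)) (hb _) (hf _)
      (hasHNFiltrationAbove_last (fun i => X i.castSucc) (fun i => f i.castSucc)
        (fun i => φ i.castSucc) h0 (hφ.comp_strictMono (Fin.strictMono_castSucc))
        (fun i => hφ (Fin.castSucc_lt_last i)) (fun _ => hf _))

lemma HasHNFiltration.exists_hasHNFiltrationAbove {E : D} (h : HasHNFiltration P E) :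
    ∃ b, HasHNFiltrationAbove P b E := by
  obtain ⟨n, X, f, φ, h0, ⟨e⟩, hφ, hf⟩ := h
  obtain ⟨b, hb⟩ := (Set.finite_range φ).bddBelow
  exact ⟨b - 1, (hasHNFiltrationAbove_last X f φ h0 hφ
    (fun i => by linarith [hb ⟨i, rfl⟩]) hf).of_iso e⟩

lemma exists_filtration_snoc {n : ℕ} {X : Fin (n + 1) → D}
    {f : ∀ i : Fin n, X i.castSucc ⟶ X i.succ} {φ : Fin n → ℝ} {b ψ : ℝ} {V : D}
    (h0 : IsZero (X 0)) (hφ : StrictAnti φ) (hψ : ∀ i, ψ < φ i)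
    (hf : ∀ i, HasSemistableCone P (φ i) (f i))
    (u : X (Fin.last n) ⟶ V) (hbψ : b < ψ) (hu : HasSemistableCone P ψ u) :
    ∃ (X' : Fin (n + 2) → D) (f' : ∀ i : Fin (n + 1), X' i.castSucc ⟶ X' i.succ)
      (φ' : Fin (n + 1) → ℝ), IsZero (X' 0) ∧ X' (Fin.last (n + 1)) = V ∧ StrictAnti φ' ∧
      (∀ i, b < φ' i) ∧ ∀ i, HasSemistableCone P (φ' i) (f' i) := by
  let X' : Fin (n + 2) → D := Fin.snoc X V
  have hX' : ∀ i, X' i.castSucc = X i := Fin.snoc_castSucc (α := fun _ => D) (p := X) (x := V)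
  have hX'last : X' (Fin.last (n + 1)) = V :=
    Fin.snoc_last (α := fun _ => D) (p := X) (x := V)
  refine ⟨X', Fin.lastCases (motive := fun i => X' i.castSucc ⟶ X' i.succ)
      (eqToHom (hX' _) ≫ u ≫ eqToHom hX'last.symm)
      (fun j => eqToHom (hX' _) ≫ f j ≫ eqToHom (hX' j.succ).symm),
    Fin.snoc φ ψ, by simpa [X'] using h0, hX'last, ?_, ?_, ?_⟩
  · intro i j hij
    obtain ⟨i, rfl⟩ := Fin.eq_castSucc_of_ne_last (hij.trans_le (Fin.le_last j)).ne
    induction j using Fin.lastCases with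
    | last => simpa only [Fin.snoc_last, Fin.snoc_castSucc] using hψ i
    | cast j =>
      simpa only [Fin.snoc_castSucc] using hφ (Fin.castSucc_lt_castSucc_iff.mp hij)
  · refine Fin.lastCases ?_ (fun j => ?_) <;> simp only [Fin.snoc_last, Fin.snoc_castSucc]
    · exact hbψ
    · exact hbψ.trans (hψ j)
  · refine Fin.lastCases ?_ (fun j => ?_)
    · simp only [Fin.snoc_last, Fin.lastCases_last]
      exact hu.of_iso (eqToIso (hX' _)).symm (eqToIso hX'last).symm (by simp)
    · simp only [Fin.snoc_castSucc, Fin.lastCases_castSucc]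
      exact (hf j).of_iso (eqToIso (hX' _)).symm (eqToIso (hX' j.succ)).symm (by simp)

lemma HasHNFiltrationAbove.exists_filtration {b : ℝ} {E : D} (h : HasHNFiltrationAbove P b E) :
    ∃ (n : ℕ) (X : Fin (n + 1) → D) (f : ∀ i : Fin n, X i.castSucc ⟶ X i.succ)
      (φ : Fin n → ℝ), IsZero (X 0) ∧ X (Fin.last n) = E ∧ StrictAnti φ ∧ (∀ i, b < φ i) ∧
      ∀ i, HasSemistableCone P (φ i) (f i) := by
  induction h with
  | @of_isZero _ E hE =>
    exact ⟨0, fun _ => E, finZeroElim, finZeroElim, hE, rfl, fun i => i.elim0, finZeroElim,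
      finZeroElim⟩
  | extension u hbφ hu _ ih =>
    obtain ⟨n, X, f, φ, h0, rfl, hφ, hb, hf⟩ := ih
    exact ⟨n + 1, exists_filtration_snoc h0 hφ hb hf u hbφ hu⟩

lemma HasHNFiltrationAbove.hasHNFiltration {b : ℝ} {E : D} (h : HasHNFiltrationAbove P b E) :
    HasHNFiltration P E := by
  obtain ⟨n, X, f, φ, h0, hX, hφ, -, hf⟩ := h.exists_filtration
  exact ⟨n, X, f, φ, h0, ⟨eqToIso hX⟩, hφ, hf⟩

noncomputable def biprodIsoPi (F : WalkingPair → D) : F .left ⊞ F .right ≅ ∏ᶜ F where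
  hom := Pi.lift fun j => WalkingPair.casesOn j biprod.fst biprod.snd
  inv := biprod.lift (Pi.π F .left) (Pi.π F .right)
  hom_inv_id := by ext <;> simp
  inv_hom_id := by ext ⟨_ | _⟩ <;> simp

lemma exists_distinguished_biprod_map {T₁ T₂ : Triangle D} (hT₁ : T₁ ∈ distTriang D)
    (hT₂ : T₂ ∈ distTriang D) :
    ∃ (A : D) (g : T₁.obj₂ ⊞ T₂.obj₂ ⟶ A) (h : A ⟶ (T₁.obj₁ ⊞ T₂.obj₁)⟦(1 : ℤ)⟧),
      Triangle.mk (biprod.map T₁.mor₁ T₂.mor₁) g h ∈ distTriang D ∧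
      Nonempty (A ≅ T₁.obj₃ ⊞ T₂.obj₃) := by
  obtain ⟨A, g, h, hT⟩ := distinguished_cocone_triangle (biprod.map T₁.mor₁ T₂.mor₁)
  let T : WalkingPair → Triangle D := fun j => WalkingPair.casesOn j T₁ T₂
  have hT' : productTriangle T ∈ distTriang D :=
    productTriangle_distinguished T (by rintro (_ | _) <;> assumption)
  have comm : biprod.map T₁.mor₁ T₂.mor₁ ≫ (biprodIsoPi fun j => (T j).obj₂).hom =
      (biprodIsoPi fun j => (T j).obj₁).hom ≫ Limits.Pi.map fun j => (T j).mor₁ := by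
    apply Pi.hom_ext
    rintro (_ | _) <;> simp [biprodIsoPi, T]
  obtain ⟨e, -⟩ := exists_iso_of_arrow_iso _ _ hT hT' (Arrow.isoMk _ _ comm.symm)
  exact ⟨A, g, h, hT, ⟨Triangle.π₃.mapIso e ≪≫ (biprodIsoPi fun j => (T j).obj₃).symm⟩⟩

namespace HasSemistableCone

variable {φ : ℝ} {X₁ Y₁ X₂ Y₂ : D} {f₁ : X₁ ⟶ Y₁} {f₂ : X₂ ⟶ Y₂}

lemma biprod_map (hPiso : ∀ X Y : D, X ∈ P φ → Nonempty (X ≅ Y) → Y ∈ P φ)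
    (hPbiprod : ∀ X Y : D, X ∈ P φ → Y ∈ P φ → (X ⊞ Y) ∈ P φ)
    (h₁ : HasSemistableCone P φ f₁) (h₂ : HasSemistableCone P φ f₂) :
    HasSemistableCone P φ (biprod.map f₁ f₂) := by
  obtain ⟨A₁, g₁, k₁, hT₁, hA₁, hP₁⟩ := h₁
  obtain ⟨A₂, g₂, k₂, hT₂, -, hP₂⟩ := h₂
  obtain ⟨A, g, k, hT, ⟨e⟩⟩ := exists_distinguished_biprod_map hT₁ hT₂
  exact ⟨A, g, k, hT, fun hA => hA₁ ((biprod_isZero_iff _ _).mp (hA.of_iso e.symm)).1,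
    hPiso _ _ (hPbiprod _ _ hP₁ hP₂) ⟨e.symm⟩⟩

lemma biprod_map_id (hPiso : ∀ X Y : D, X ∈ P φ → Nonempty (X ≅ Y) → Y ∈ P φ)
    (h₁ : HasSemistableCone P φ f₁) (Y : D) :
    HasSemistableCone P φ (biprod.map f₁ (𝟙 Y)) := by
  obtain ⟨A₁, g₁, k₁, hT₁, hA₁, hP₁⟩ := h₁
  obtain ⟨A, g, k, hT, ⟨e⟩⟩ :=
    exists_distinguished_biprod_map hT₁ (contractible_distinguished Y)
  let e' : A₁ ≅ A := isoBiprodZero (isZero_zero D) ≪≫ e.symm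
  exact ⟨A, g, k, hT, fun hA => hA₁ (hA.of_iso e'), hPiso _ _ hP₁ ⟨e'⟩⟩

lemma id_biprod_map (hPiso : ∀ X Y : D, X ∈ P φ → Nonempty (X ≅ Y) → Y ∈ P φ)
    (X : D) (h₂ : HasSemistableCone P φ f₂) :
    HasSemistableCone P φ (biprod.map (𝟙 X) f₂) := by
  obtain ⟨A₂, g₂, k₂, hT₂, hA₂, hP₂⟩ := h₂
  obtain ⟨A, g, k, hT, ⟨e⟩⟩ :=
    exists_distinguished_biprod_map (contractible_distinguished X) hT₂
  let e' : A₂ ≅ A := isoZeroBiprod (isZero_zero D) ≪≫ e.symm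
  exact ⟨A, g, k, hT, fun hA => hA₂ (hA.of_iso e'), hPiso _ _ hP₂ ⟨e'⟩⟩

end HasSemistableCone

lemma HasHNFiltrationAbove.biprod
    (hPiso : ∀ (φ : ℝ) (X Y : D), X ∈ P φ → Nonempty (X ≅ Y) → Y ∈ P φ)
    (hPbiprod : ∀ (φ : ℝ) (X Y : D), X ∈ P φ → Y ∈ P φ → (X ⊞ Y) ∈ P φ)
    {b : ℝ} {E F : D} (hE : HasHNFiltrationAbove P b E) (hF : HasHNFiltrationAbove P b F) :
    HasHNFiltrationAbove P b (E ⊞ F) := by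
  induction hE generalizing F with
  | of_isZero hE => exact hF.of_iso (isoZeroBiprod hE)
  | @extension b φ C E u hbφ hu hC ihC =>
    induction hF with
    | of_isZero hF => exact (extension u hbφ hu hC).of_iso (isoBiprodZero hF)
    | @extension c ψ C₂ F v hcψ hv hC₂ ihC₂ =>
      rcases lt_trichotomy φ ψ with hlt | rfl | hgt
      · exact extension (biprod.map u (𝟙 F)) hbφ (hu.biprod_map_id (hPiso φ) F)
          (ihC (extension v hlt hv hC₂))
      · exact extension (biprod.map u v) hbφ (hu.biprod_map (hPiso φ) (hPbiprod φ) hv)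
          (ihC hC₂)
      · exact extension (biprod.map (𝟙 E) v) hcψ (hv.id_biprod_map (hPiso ψ) E) (ihC₂ hgt)

end HNFiltration

theorem stmt4_general
    (P : ℝ → Set D)
    -- each `P φ` is a strictly full additive subcategory
    (hPiso : ∀ (φ : ℝ) (X Y : D), X ∈ P φ → Nonempty (X ≅ Y) → Y ∈ P φ)
    (hPbiprod : ∀ (φ : ℝ) (X Y : D), X ∈ P φ → Y ∈ P φ → (X ⊞ Y) ∈ P φ)
    (X Y : D) (hX : HasHNFiltration P X) (hY : HasHNFiltration P Y) :
    HasHNFiltration P (X ⊞ Y) := by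
  obtain ⟨b₁, hX⟩ := hX.exists_hasHNFiltrationAbove
  obtain ⟨b₂, hY⟩ := hY.exists_hasHNFiltrationAbove
  exact ((hX.mono (min_le_left b₁ b₂)).biprod hPiso hPbiprod
    (hY.mono (min_le_right b₁ b₂))).hasHNFiltration

theorem stmt4 [HasBinaryBiproducts D]
    (Z : D → ℂ)
    -- `Z` is additive on distinguished triangles
    (hZadd : ∀ T ∈ distTriang D, Z (Triangle.obj₂ T) = Z T.obj₁ + Z T.obj₃)
    (P : ℝ → Set D)
    -- each `P φ` is a strictly full additive subcategory
    (hPiso : ∀ (φ : ℝ) (X Y : D), X ∈ P φ → Nonempty (X ≅ Y) → Y ∈ P φ)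
    (hPzero : ∀ (φ : ℝ) (X : D), IsZero X → X ∈ P φ)
    (hPbiprod : ∀ (φ : ℝ) (X Y : D), X ∈ P φ → Y ∈ P φ → (X ⊞ Y) ∈ P φ)
    -- (s1)
    (hs1 : ∀ (φ : ℝ) (E : D), E ∈ P φ → ¬ IsZero E →
      ∃ m : ℝ, 0 < m ∧ Z E = (m : ℂ) * Complex.exp ((Real.pi : ℂ) * Complex.I * (φ : ℂ)))
    -- (s2)
    (hs2 : ∀ (φ ψ : ℝ), ψ < φ → ∀ E ∈ P φ, ∀ F ∈ P ψ, ∀ f : E ⟶ F, f = 0)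
    -- (s3)
    (hs3 : ∀ (φ : ℝ) (X : D), X ∈ P (φ + 1) ↔ ∃ Y ∈ P φ, Nonempty (X ≅ Y⟦(1 : ℤ)⟧))
    (X Y : D) (hX : HasHNFiltration P X) (hY : HasHNFiltration P Y) :
    HasHNFiltration P (X ⊞ Y) :=
  stmt4_general P hPiso hPbiprod X Y hX hY
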